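/- arXiv:0908.4459 — 2 statements merged into one kernel-verified Lean document; each statement's English description precedes it below -/
import Mathlib

section
/- Let Ω ⊆ ℂⁿ be a bounded domain, Ω' a domain strictly containing Ω, and suppose every bounded holomorphic function on Ω extends to a holomorphic function on Ω'. Let P ∈ Ω' \ Ω and define f_j(z) = z_j − P_j for 1 ≤ j ≤ n. Then there do NOT exist bounded holomorphic functions g_1, …, g_n on Ω with f_1 g_1 + ⋯ + f_n g_n ≡ 1 on Ω. -/
/-!
The function `F z = ∑ j, (z j - P j) * G j z`, built from the extensions `G j` of a putative
solution, is holomorphic on `Ω'` and equal to `1` on `Ω`. By the identity theorem, which holds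
in several variables because it can be run along complex lines inside balls, `F = 1` on all of
`Ω'`; but `F P = 0`.
-/

open Set Filter Topology

section IdentityTheorem

variable {E F : Type*} [NormedAddCommGroup E] [NormedSpace ℂ E]
  [NormedAddCommGroup F] [NormedSpace ℂ F] [CompleteSpace F] {f g : E → F}

theorem DifferentiableOn.eqOn_of_convex_of_eventuallyEq {s : Set E} (hs : Convex ℝ s)
    (ho : IsOpen s) (hf : DifferentiableOn ℂ f s) (hg : DifferentiableOn ℂ g s) {u : E}
    (hu : u ∈ s) (hfg : f =ᶠ[𝓝 u] g) : EqOn f g s := by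
  intro v hv
  set L : ℂ → E := fun t => u + t • (v - u) with hL
  have hLdiff : Differentiable ℂ L := by fun_prop
  have hT : Convex ℝ (L ⁻¹' s) :=
    (hs.translate_preimage_right u).linear_preimage
      ((LinearMap.toSpanSingleton ℂ E (v - u)).restrictScalars ℝ)
  have hTo : IsOpen (L ⁻¹' s) := ho.preimage hLdiff.continuous
  have hL0 : L 0 = u := by simp [hL]
  have hL1 : L 1 = v := by simp [hL]
  have han : ∀ {h : E → F}, DifferentiableOn ℂ h s → AnalyticOnNhd ℂ (h ∘ L) (L ⁻¹' s) :=
    fun hh => (hh.comp hLdiff.differentiableOn (mapsTo_preimage L s)).analyticOnNhd hTo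
  have hfg' : f ∘ L =ᶠ[𝓝 0] g ∘ L :=
    (hL0 ▸ hLdiff.continuous.continuousAt : Tendsto L (𝓝 0) (𝓝 u)).eventually hfg
  simpa [hL1] using (han hf).eqOn_of_preconnected_of_eventuallyEq (han hg) hT.isPreconnected
    (by simpa [hL0] : (0 : ℂ) ∈ L ⁻¹' s) hfg' (by simpa [hL1] : (1 : ℂ) ∈ L ⁻¹' s)

theorem DifferentiableOn.eqOn_of_preconnected_of_eventuallyEq {U : Set E} (hU : IsPreconnected U)
    (ho : IsOpen U) (hf : DifferentiableOn ℂ f U) (hg : DifferentiableOn ℂ g U) {z₀ : E}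
    (h₀ : z₀ ∈ U) (hfg : f =ᶠ[𝓝 z₀] g) : EqOn f g U := by
  set V := {z | f =ᶠ[𝓝 z] g}
  have hVU : closure V ∩ U ⊆ V := by
    rintro w ⟨hwV, hwU⟩
    obtain ⟨r, hr, hball⟩ := Metric.isOpen_iff.mp ho w hwU
    obtain ⟨u, huV, hu⟩ := Metric.mem_closure_iff.mp hwV r hr
    have := (hf.mono hball).eqOn_of_convex_of_eventuallyEq (convex_ball w r) Metric.isOpen_ball
      (hg.mono hball) (Metric.mem_ball'.mpr hu) huV
    exact eventuallyEq_of_mem (Metric.ball_mem_nhds w hr) this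
  exact fun z hz => EventuallyEq.eq_of_nhds <|
    hU.subset_of_closure_inter_subset isOpen_setOfPred_eventually_nhds ⟨z₀, h₀, hfg⟩ hVU hz

end IdentityTheorem

theorem no_corona_solution_general (n : ℕ) (Ω Ω' : Set (Fin n → ℂ))
    (hΩopen : IsOpen Ω) (hΩconn : IsConnected Ω)
    (hΩ'open : IsOpen Ω') (hΩ'conn : IsConnected Ω')
    (hsub : Ω ⊆ Ω')
    (hext : ∀ h : (Fin n → ℂ) → ℂ, DifferentiableOn ℂ h Ω →
      (∃ M : ℝ, ∀ z ∈ Ω, ‖h z‖ ≤ M) →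
      ∃ H : (Fin n → ℂ) → ℂ, DifferentiableOn ℂ H Ω' ∧ ∀ z ∈ Ω, H z = h z)
    (P : Fin n → ℂ) (hP : P ∈ Ω' \ Ω) :
    ¬ ∃ g : Fin n → (Fin n → ℂ) → ℂ,
        (∀ j, DifferentiableOn ℂ (g j) Ω ∧ ∃ M : ℝ, ∀ z ∈ Ω, ‖g j z‖ ≤ M) ∧
        ∀ z ∈ Ω, (∑ j, (z j - P j) * g j z) = 1 := by
  rintro ⟨g, hg, hsum⟩
  choose G hGdiff hGg using fun j => hext (g j) (hg j).1 (hg j).2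
  set F : (Fin n → ℂ) → ℂ := fun z => ∑ j, (z j - P j) * G j z
  have hFdiff : DifferentiableOn ℂ F Ω' := by fun_prop
  obtain ⟨z₀, hz₀⟩ := hΩconn.nonempty
  have hF₀ : F =ᶠ[𝓝 z₀] fun _ => 1 := eventuallyEq_of_mem (hΩopen.mem_nhds hz₀) fun z hz => by
    simp only [F, ← hsum z hz, hGg _ z hz]
  have hF : EqOn F (fun _ => 1) Ω' := hFdiff.eqOn_of_preconnected_of_eventuallyEq
    hΩ'conn.isPreconnected hΩ'open (differentiableOn_const 1) (hsub hz₀) hF₀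
  simpa [F] using hF hP.1

/-- If every bounded holomorphic function on a bounded domain `Ω ⊆ ℂⁿ` extends
holomorphically to a strictly larger domain `Ω'`, and `P ∈ Ω' \ Ω`, then the corona
problem for the data `f_j(z) = z_j - P_j` has no bounded holomorphic solution on `Ω`. -/
theorem no_corona_solution (n : ℕ) (Ω Ω' : Set (Fin n → ℂ))
    (hΩopen : IsOpen Ω) (hΩconn : IsConnected Ω) (hΩbdd : Bornology.IsBounded Ω)
    (hΩ'open : IsOpen Ω') (hΩ'conn : IsConnected Ω')
    (hsub : Ω ⊆ Ω') (hne : Ω ≠ Ω')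
    (hext : ∀ h : (Fin n → ℂ) → ℂ, DifferentiableOn ℂ h Ω →
      (∃ M : ℝ, ∀ z ∈ Ω, ‖h z‖ ≤ M) →
      ∃ H : (Fin n → ℂ) → ℂ, DifferentiableOn ℂ H Ω' ∧ ∀ z ∈ Ω, H z = h z)
    (P : Fin n → ℂ) (hP : P ∈ Ω' \ Ω) :
    ¬ ∃ g : Fin n → (Fin n → ℂ) → ℂ,
        (∀ j, DifferentiableOn ℂ (g j) Ω ∧ ∃ M : ℝ, ∀ z ∈ Ω, ‖g j z‖ ≤ M) ∧
        ∀ z ∈ Ω, (∑ j, (z j - P j) * g j z) = 1 :=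
  no_corona_solution_general n Ω Ω' hΩopen hΩconn hΩ'open hΩ'conn hsub hext P hP
end

section
/- Let Ω ⊆ ℂⁿ and Ω̂ ⊋ Ω be bounded domains, and suppose the restriction of the extension assignment T : H^∞(Ω) → H^∞(Ω̂) is a well-defined linear map (every bounded holomorphic f on Ω has a unique bounded holomorphic extension f̂ to Ω̂). Then ‖f̂‖_{H^∞(Ω̂)} = ‖f‖_{H^∞(Ω)} for every f ∈ H^∞(Ω); in particular T has operator norm 1 (when H^∞(Ω) is nonzero). -/
/-!
If `‖F z₀‖` exceeded the supremum `s` of `‖f‖` on `Ω`, then `c = F z₀` would stay at distance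
at least `‖c‖ - s > 0` from the values of `f`, so `(c - f)⁻¹` would be a bounded holomorphic
function on `Ω` with an extension `H` to `Ωhat`. Then `H * (c - F) - 1` vanishes on `Ω`, hence
on all of `Ωhat` by the identity principle, which is absurd at `z₀`. The identity principle in
several variables is reduced to the one-variable one by restricting to complex lines.
-/

open Metric Filter Set Topology

section IdentityPrinciple

variable {E F : Type*} [NormedAddCommGroup E] [NormedSpace ℂ E]
  [NormedAddCommGroup F] [NormedSpace ℂ F] [CompleteSpace F]

theorem DifferentiableOn.eqOn_zero_of_convex_of_eventuallyEq_zero {f : E → F} {V : Set E}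
    (hf : DifferentiableOn ℂ f V) (hVo : IsOpen V) (hVc : Convex ℝ V) {y : E} (hy : y ∈ V)
    (hfy : f =ᶠ[𝓝 y] 0) : EqOn f 0 V := by
  intro x hx
  let line : ℂ → E := fun t => y + t • (x - y)
  have hline : Differentiable ℂ line := by fun_prop
  have hTo : IsOpen (line ⁻¹' V) := hVo.preimage hline.continuous
  have hTc : Convex ℝ (line ⁻¹' V) :=
    (hVc.translate_preimage_right y).is_linear_preimage
      ((LinearMap.toSpanSingleton ℂ E (x - y)).restrictScalars ℝ).isLinear
  have h0 : line 0 = y := by simp [line]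
  have h1 : line 1 = x := by simp [line]
  have hzero : EqOn (f ∘ line) 0 (line ⁻¹' V) :=
    ((hf.comp hline.differentiableOn fun _ ht => ht).analyticOnNhd hTo)
      |>.eqOn_zero_of_preconnected_of_eventuallyEq_zero hTc.isPreconnected
        (show line 0 ∈ V from h0 ▸ hy)
        ((hline.continuous.tendsto' 0 y h0).eventually hfy)
  simpa [h1] using hzero (show line 1 ∈ V from h1 ▸ hx)

theorem DifferentiableOn.eqOn_zero_of_isPreconnected_of_eventuallyEq_zero {f : E → F}
    {U : Set E} (hf : DifferentiableOn ℂ f U) (hUo : IsOpen U) (hUc : IsPreconnected U)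
    {w : E} (hw : w ∈ U) (hfw : f =ᶠ[𝓝 w] 0) : EqOn f 0 U := by
  let S : Set E := {z | f =ᶠ[𝓝 z] 0}
  have hSo : IsOpen S := isOpen_iff_mem_nhds.2 fun _ hz => hz.eventually_nhds
  have hclosed : closure S ∩ U ⊆ S := by
    rintro z ⟨hzS, hzU⟩
    obtain ⟨r, hr, hball⟩ := isOpen_iff.1 hUo z hzU
    obtain ⟨y, hyS, hyz⟩ := mem_closure_iff.1 hzS r hr
    have hy : y ∈ ball z r := mem_ball_comm.1 hyz
    exact eventually_of_mem (ball_mem_nhds z hr) <|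
      (hf.mono hball).eqOn_zero_of_convex_of_eventuallyEq_zero isOpen_ball (convex_ball z r) hy hyS
  have hUS : U ⊆ S := hUc.subset_of_closure_inter_subset hSo ⟨w, hw, hfw⟩ hclosed
  exact fun z hz => (hUS hz).self_of_nhds

end IdentityPrinciple

section Extension

variable {E : Type*} [NormedAddCommGroup E] [NormedSpace ℂ E]

def ExtendsBoundedHolomorphic (Ω Ωhat : Set E) : Prop :=
  ∀ f : E → ℂ, DifferentiableOn ℂ f Ω → (∃ M : ℝ, ∀ z ∈ Ω, ‖f z‖ ≤ M) →
    ∃ F : E → ℂ, DifferentiableOn ℂ F Ωhat ∧ (∃ M : ℝ, ∀ z ∈ Ωhat, ‖F z‖ ≤ M) ∧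
      ∀ z ∈ Ω, F z = f z

variable {Ω Ωhat : Set E} {f F : E → ℂ}

theorem ExtendsBoundedHolomorphic.extension_ne (hext : ExtendsBoundedHolomorphic Ω Ωhat)
    (hΩo : IsOpen Ω) (hΩne : Ω.Nonempty) (hΩhato : IsOpen Ωhat)
    (hΩhatc : IsPreconnected Ωhat) (hsub : Ω ⊆ Ωhat) (hF : DifferentiableOn ℂ F Ωhat)
    (hFf : EqOn F f Ω) {c : ℂ} {δ : ℝ} (hδ : 0 < δ) (hc : ∀ z ∈ Ω, δ ≤ ‖c - f z‖) :
    ∀ z ∈ Ωhat, F z ≠ c := by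
  have hcf : ∀ z ∈ Ω, c - f z ≠ 0 := fun z hz =>
    norm_pos_iff.1 (hδ.trans_le (hc z hz))
  have hf : DifferentiableOn ℂ f Ω := (hF.mono hsub).congr fun z hz => (hFf hz).symm
  obtain ⟨H, hH, -, hHeq⟩ := hext (fun z => (c - f z)⁻¹)
    (((differentiableOn_const c).sub hf).inv hcf)
    ⟨δ⁻¹, fun z hz => by simpa only [norm_inv] using inv_anti₀ hδ (hc z hz)⟩
  obtain ⟨w, hw⟩ := hΩne
  have hone : EqOn (fun z => H z * (c - F z) - 1) 0 Ωhat := by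
    refine ((hH.mul ((differentiableOn_const c).sub hF)).sub_const 1)
      |>.eqOn_zero_of_isPreconnected_of_eventuallyEq_zero hΩhato hΩhatc (hsub hw) ?_
    filter_upwards [hΩo.mem_nhds hw] with z hz
    simp [hHeq z hz, hFf hz, hcf z hz]
  intro z hz hFz
  simpa [hFz] using hone hz

theorem ExtendsBoundedHolomorphic.norm_extension_le (hext : ExtendsBoundedHolomorphic Ω Ωhat)
    (hΩo : IsOpen Ω) (hΩne : Ω.Nonempty) (hΩhato : IsOpen Ωhat)
    (hΩhatc : IsPreconnected Ωhat) (hsub : Ω ⊆ Ωhat) (hF : DifferentiableOn ℂ F Ωhat)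
    (hFf : EqOn F f Ω) {s : ℝ} (hfs : ∀ z ∈ Ω, ‖f z‖ ≤ s) : ∀ z ∈ Ωhat, ‖F z‖ ≤ s := by
  intro z hz
  by_contra! hlt
  refine hext.extension_ne hΩo hΩne hΩhato hΩhatc hsub hF hFf (sub_pos.2 hlt)
    (fun w hw => ?_) z hz rfl
  linarith [norm_sub_norm_le (F z) (f w), hfs w hw]

end Extension

theorem extension_operator_norm_one_general (n : ℕ) (Ω Ωhat : Set (Fin n → ℂ))
    (hΩopen : IsOpen Ω) (hΩconn : IsConnected Ω)
    (hΩhatopen : IsOpen Ωhat) (hΩhatconn : IsConnected Ωhat)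
    (hsub : Ω ⊆ Ωhat)
    (hext : ∀ f : (Fin n → ℂ) → ℂ, DifferentiableOn ℂ f Ω →
      (∃ M : ℝ, ∀ z ∈ Ω, ‖f z‖ ≤ M) →
      ∃ F : (Fin n → ℂ) → ℂ, DifferentiableOn ℂ F Ωhat ∧
        (∃ M : ℝ, ∀ z ∈ Ωhat, ‖F z‖ ≤ M) ∧ ∀ z ∈ Ω, F z = f z) :
    ∀ f F : (Fin n → ℂ) → ℂ, DifferentiableOn ℂ f Ω →
      (∃ M : ℝ, ∀ z ∈ Ω, ‖f z‖ ≤ M) →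
      DifferentiableOn ℂ F Ωhat →
      (∃ M : ℝ, ∀ z ∈ Ωhat, ‖F z‖ ≤ M) →
      (∀ z ∈ Ω, F z = f z) →
      (⨆ z : ↥Ωhat, ‖F z‖) = ⨆ z : ↥Ω, ‖f z‖ := by
  intro f F _ ⟨M, hM⟩ hF ⟨N, hN⟩ hFf
  have : Nonempty Ω := hΩconn.nonempty.to_subtype
  have : Nonempty Ωhat := (hΩconn.nonempty.mono hsub).to_subtype
  have hfbdd : BddAbove (range fun z : Ω => ‖f z‖) := ⟨M, by rintro _ ⟨z, rfl⟩; exact hM z z.2⟩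
  have hFbdd : BddAbove (range fun z : Ωhat => ‖F z‖) := ⟨N, by rintro _ ⟨z, rfl⟩; exact hN z z.2⟩
  refine le_antisymm (ciSup_le fun z => ?_) (ciSup_le fun z => ?_)
  · exact ExtendsBoundedHolomorphic.norm_extension_le hext hΩopen hΩconn.nonempty hΩhatopen
      hΩhatconn.isPreconnected hsub hF hFf (fun w hw => le_ciSup hfbdd ⟨w, hw⟩) z z.2
  · exact hFf z z.2 ▸ le_ciSup hFbdd ⟨z, hsub z.2⟩

/-- If every bounded holomorphic function on a bounded domain `Ω` has a (unique)
bounded holomorphic extension to the strictly larger bounded domain `Ω̂`, then the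
extension has the same sup norm; in particular the extension operator `T` has
norm `1`. -/
theorem extension_operator_norm_one (n : ℕ) (Ω Ωhat : Set (Fin n → ℂ))
    (hΩopen : IsOpen Ω) (hΩconn : IsConnected Ω) (hΩbdd : Bornology.IsBounded Ω)
    (hΩhatopen : IsOpen Ωhat) (hΩhatconn : IsConnected Ωhat)
    (hΩhatbdd : Bornology.IsBounded Ωhat)
    (hsub : Ω ⊆ Ωhat) (hne : Ω ≠ Ωhat)
    (hext : ∀ f : (Fin n → ℂ) → ℂ, DifferentiableOn ℂ f Ω →
      (∃ M : ℝ, ∀ z ∈ Ω, ‖f z‖ ≤ M) →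
      ∃ F : (Fin n → ℂ) → ℂ, DifferentiableOn ℂ F Ωhat ∧
        (∃ M : ℝ, ∀ z ∈ Ωhat, ‖F z‖ ≤ M) ∧ ∀ z ∈ Ω, F z = f z) :
    ∀ f F : (Fin n → ℂ) → ℂ, DifferentiableOn ℂ f Ω →
      (∃ M : ℝ, ∀ z ∈ Ω, ‖f z‖ ≤ M) →
      DifferentiableOn ℂ F Ωhat →
      (∃ M : ℝ, ∀ z ∈ Ωhat, ‖F z‖ ≤ M) →
      (∀ z ∈ Ω, F z = f z) →
      (⨆ z : ↥Ωhat, ‖F z‖) = ⨆ z : ↥Ω, ‖f z‖ :=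
  extension_operator_norm_one_general n Ω Ωhat hΩopen hΩconn hΩhatopen hΩhatconn hsub hext
end
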